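/- Soundness of PML: let Γ ∪ {A} be a set of PML formulas. If Γ ⊢_pml A, then Γ ⊨ A, i.e., every mixed Kripke model that validates all formulas of Γ also validates A. -/

import Mathlib

/-! Soundness is proved node by node, by induction on derivations. Besides the usual
intuitionistic clauses, two facts about mixed models are needed. A node forcing `⊥` forces
every intuitionistic formula, which validates (⊥_i). A classical formula forced at a node
that does not force `⊥` is forced at every node; hence classical formulas are stable
(`¬¬A` forces `A`), which validates (⊥_c). -/


namespace PML

/-- The three kinds of propositional variables: minimal, intuitionistic, classical. -/
inductive Kind : Type
  | m | i | c
deriving DecidableEq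

/-- Formulas of propositional mixed logic (PML). -/
inductive Formula : Type
  | var : Kind → ℕ → Formula
  | bot : Formula
  | and : Formula → Formula → Formula
  | or : Formula → Formula → Formula
  | imp : Formula → Formula → Formula
deriving DecidableEq

namespace Formula

/-- ¬A abbreviates A → ⊥. -/
def neg (A : Formula) : Formula := imp A bot

/-- All variables occurring in the formula have a kind satisfying `p`. -/
def onlyKinds (p : Kind → Prop) : Formula → Prop
  | var k _ => p k
  | bot => True
  | and A B => onlyKinds p A ∧ onlyKinds p B
  | or A B => onlyKinds p A ∧ onlyKinds p B
  | imp A B => onlyKinds p A ∧ onlyKinds p B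

/-- A classical formula: only classical variables. -/
def IsClassical (A : Formula) : Prop := onlyKinds (fun k => k = Kind.c) A

/-- An intuitionistic formula: only intuitionistic and classical variables. -/
def IsIntuitionistic (A : Formula) : Prop := onlyKinds (fun k => k = Kind.i ∨ k = Kind.c) A

/-- A formula without classical variables. -/
def NoClassicalVar (A : Formula) : Prop := onlyKinds (fun k => k ≠ Kind.c) A

/-- A formula without classical and without intuitionistic variables. -/
def OnlyMinimalVar (A : Formula) : Prop := onlyKinds (fun k => k = Kind.m) A

/-- A formula without intuitionistic variables. -/
def NoIntuitVar (A : Formula) : Prop := onlyKinds (fun k => k ≠ Kind.i) A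

/-- Substitution of the formula `F` for every occurrence of the variable of kind `k`, index `n`. -/
def subst (F : Formula) (k : Kind) (n : ℕ) : Formula → Formula
  | var k' n' => if k' = k ∧ n' = n then F else var k' n'
  | bot => bot
  | and A B => and (subst F k n A) (subst F k n B)
  | or A B => or (subst F k n A) (subst F k n B)
  | imp A B => imp (subst F k n A) (subst F k n B)

end Formula

/-- Which optional rules are available: the intuitionistic absurdity rule (⊥_i),
the classical absurdity rule (⊥_c), and whether (∨_E) is unrestricted
(`fullOrE = false` gives the PML^∨ restriction). -/
structure Rules where
  botI : Bool
  botC : Bool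
  fullOrE : Bool

/-- Natural deduction for mixed logic, parametrized by the available rules. -/
inductive Deriv (R : Rules) : Set Formula → Formula → Prop
  | ax (A : Formula) : Deriv R {A} A
  | weak {Γ : Set Formula} {A : Formula} (B : Formula) : Deriv R Γ A → Deriv R (insert B Γ) A
  | andI {Γ₁ Γ₂ : Set Formula} {A₁ A₂ : Formula} :
      Deriv R Γ₁ A₁ → Deriv R Γ₂ A₂ → Deriv R (Γ₁ ∪ Γ₂) (A₁.and A₂)
  | andE₁ {Γ : Set Formula} {A₁ A₂ : Formula} : Deriv R Γ (A₁.and A₂) → Deriv R Γ A₁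
  | andE₂ {Γ : Set Formula} {A₁ A₂ : Formula} : Deriv R Γ (A₁.and A₂) → Deriv R Γ A₂
  | orI₁ {Γ : Set Formula} {A₁ : Formula} (A₂ : Formula) : Deriv R Γ A₁ → Deriv R Γ (A₁.or A₂)
  | orI₂ {Γ : Set Formula} {A₂ : Formula} (A₁ : Formula) : Deriv R Γ A₂ → Deriv R Γ (A₁.or A₂)
  | orE {Γ₁ Γ₂ Γ₃ : Set Formula} {A₁ A₂ B : Formula} :
      (R.fullOrE = true ∨ ((A₁.or A₂).IsClassical → B.IsClassical)) →
      Deriv R Γ₁ (A₁.or A₂) → Deriv R (insert A₁ Γ₂) B → Deriv R (insert A₂ Γ₃) B →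
      Deriv R (Γ₁ ∪ Γ₂ ∪ Γ₃) B
  | impI {Γ : Set Formula} {A₁ A₂ : Formula} : Deriv R (insert A₁ Γ) A₂ → Deriv R Γ (A₁.imp A₂)
  | impE {Γ₁ Γ₂ : Set Formula} {A₁ A₂ : Formula} :
      Deriv R Γ₁ (A₁.imp A₂) → Deriv R Γ₂ A₁ → Deriv R (Γ₁ ∪ Γ₂) A₂
  | botI {Γ : Set Formula} {A : Formula} :
      R.botI = true → A.IsIntuitionistic → Deriv R Γ Formula.bot → Deriv R Γ A
  | botC {Γ : Set Formula} {A : Formula} :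
      R.botC = true → A.IsClassical → Deriv R Γ (A.neg.neg) → Deriv R Γ A

/-- Γ ⊢_pml A : full mixed logic. -/
def DerivPML : Set Formula → Formula → Prop := Deriv ⟨true, true, true⟩

/-- Γ ⊢_(i) A : derivable without the rule (⊥_c). -/
def DerivI : Set Formula → Formula → Prop := Deriv ⟨true, false, true⟩

/-- Γ ⊢_(m) A : derivable without the rules (⊥_i) and (⊥_c). -/
def DerivM : Set Formula → Formula → Prop := Deriv ⟨false, false, true⟩

/-- Γ ⊢_(i') A : derivable without the rule (⊥_i). -/
def DerivI' : Set Formula → Formula → Prop := Deriv ⟨false, true, true⟩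

/-- Γ ⊢^∨ A : derivable in PML^∨ (restricted ∨-elimination). -/
def DerivVee : Set Formula → Formula → Prop := Deriv ⟨true, true, false⟩

/-- A Kripke frame over a poset `W`: a monotone forcing relation on atoms. -/
structure KripkeFrame (W : Type) [PartialOrder W] where
  fvar : W → Kind → ℕ → Prop
  fbot : W → Prop
  mono_var : ∀ {a b : W} (k : Kind) (n : ℕ), a ≤ b → fvar a k n → fvar b k n
  mono_bot : ∀ {a b : W}, a ≤ b → fbot a → fbot b

variable {W : Type} [PartialOrder W]

/-- Forcing, extended to compound formulas. -/
def KripkeFrame.force (M : KripkeFrame W) : W → Formula → Prop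
  | a, .var k n => M.fvar a k n
  | a, .bot => M.fbot a
  | a, .and A B => M.force a A ∧ M.force a B
  | a, .or A B => M.force a A ∨ M.force a B
  | a, .imp A B => ∀ b : W, a ≤ b → M.force b A → M.force b B

/-- A formula is valid in a model iff it is forced at every node. -/
def KripkeFrame.Valid (M : KripkeFrame W) (A : Formula) : Prop := ∀ a : W, M.force a A

/-- A mixed Kripke model: (2) a node forcing ⊥ forces every intuitionistic or classical
variable; (3) a classical variable forced at a node not forcing ⊥ is forced everywhere. -/
def IsMixed (M : KripkeFrame W) : Prop :=
  (∀ (a : W) (k : Kind) (n : ℕ), M.fbot a → (k = Kind.i ∨ k = Kind.c) → M.fvar a k n) ∧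
  (∀ (a : W) (n : ℕ), M.fvar a Kind.c n → ¬ M.fbot a → ∀ b : W, M.fvar b Kind.c n)

/-- An intuitionistic mixed Kripke model: restricted to atoms in 𝒱_m ∪ 𝒱_i ∪ {⊥}
(no classical atom is forced) and a node forcing ⊥ forces every intuitionistic variable. -/
def IsIntMixed (M : KripkeFrame W) : Prop :=
  (∀ (a : W) (n : ℕ), ¬ M.fvar a Kind.c n) ∧
  (∀ (a : W) (n : ℕ), M.fbot a → M.fvar a Kind.i n)

/-- A minimal mixed Kripke model: restricted to atoms in 𝒱_m ∪ {⊥}. -/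
def IsMinMixed (M : KripkeFrame W) : Prop :=
  (∀ (a : W) (n : ℕ), ¬ M.fvar a Kind.i n) ∧ (∀ (a : W) (n : ℕ), ¬ M.fvar a Kind.c n)

/-- Semantic entailment: every mixed Kripke model validating all of Γ validates A. -/
def Entails (Γ : Set Formula) (A : Formula) : Prop :=
  ∀ (W : Type) [PartialOrder W] [Nonempty W] (M : KripkeFrame W),
    IsMixed M → (∀ B ∈ Γ, M.Valid B) → M.Valid A

/-- A saturated set of formulas. -/
def Saturated (Δ : Set Formula) : Prop :=
  ∀ C D : Formula, DerivPML Δ (C.or D) → C ∈ Δ ∨ D ∈ Δ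

/-- The restriction 𝒦_(i) of a model to atoms in 𝒱_m ∪ 𝒱_i ∪ {⊥}. -/
def KripkeFrame.restrictI (M : KripkeFrame W) : KripkeFrame W where
  fvar a k n := k ≠ Kind.c ∧ M.fvar a k n
  fbot := M.fbot
  mono_var := by
    intro a b k n hab h
    exact ⟨h.1, M.mono_var k n hab h.2⟩
  mono_bot := fun hab h => M.mono_bot hab h

/-- The restriction 𝒦_(m) of a model to atoms in 𝒱_m ∪ {⊥}. -/
def KripkeFrame.restrictM (M : KripkeFrame W) : KripkeFrame W where
  fvar a k n := k = Kind.m ∧ M.fvar a k n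
  fbot := M.fbot
  mono_var := by
    intro a b k n hab h
    exact ⟨h.1, M.mono_var k n hab h.2⟩
  mono_bot := fun hab h => M.mono_bot hab h

/-- The translation ^m : intuitionistic variables X_i are sent to ¬¬ m(X_i). -/
def Formula.transM (m : ℕ → ℕ) : Formula → Formula
  | .var Kind.i n => ((Formula.var Kind.m (m n)).neg).neg
  | .var k n => .var k n
  | .bot => .bot
  | .and A B => .and (Formula.transM m A) (Formula.transM m B)
  | .or A B => .or (Formula.transM m A) (Formula.transM m B)
  | .imp A B => .imp (Formula.transM m A) (Formula.transM m B)

/-- The translation ^i : classical variables X_c are sent to ¬¬ i(X_c), and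
disjunctions are doubly negated. -/
def Formula.transI (f : ℕ → ℕ) : Formula → Formula
  | .var Kind.c n => ((Formula.var Kind.i (f n)).neg).neg
  | .var k n => .var k n
  | .bot => .bot
  | .and A B => .and (Formula.transI f A) (Formula.transI f B)
  | .or A B => (((Formula.transI f A).or (Formula.transI f B)).neg).neg
  | .imp A B => .imp (Formula.transI f A) (Formula.transI f B)

theorem Formula.onlyKinds_mono {p q : Kind → Prop} (hpq : ∀ k, p k → q k) {A : Formula}
    (hA : A.onlyKinds p) : A.onlyKinds q := by
  induction A with
  | var k n => exact hpq k hA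
  | bot => trivial
  | and A B ihA ihB | or A B ihA ihB | imp A B ihA ihB => exact ⟨ihA hA.1, ihB hA.2⟩

theorem Formula.IsClassical.isIntuitionistic {A : Formula} (hA : A.IsClassical) :
    A.IsIntuitionistic :=
  onlyKinds_mono (fun _ => Or.inr) hA

namespace KripkeFrame

variable {M : KripkeFrame W}

theorem force_mono {A : Formula} {a b : W} (hab : a ≤ b)
    (ha : M.force a A) : M.force b A := by
  induction A generalizing a b with
  | var k n => exact M.mono_var k n hab ha
  | bot => exact M.mono_bot hab ha
  | and A B ihA ihB => exact ⟨ihA hab ha.1, ihB hab ha.2⟩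
  | or A B ihA ihB => exact ha.imp (ihA hab) (ihB hab)
  | imp A B => exact fun c hbc => ha c (hab.trans hbc)

theorem force_of_fbot (hM : IsMixed M) {A : Formula} (hA : A.IsIntuitionistic) {a : W}
    (ha : M.fbot a) : M.force a A := by
  induction A generalizing a with
  | var k n => exact hM.1 a k n ha hA
  | bot => exact ha
  | and A B ihA ihB => exact ⟨ihA hA.1 ha, ihB hA.2 ha⟩
  | or A B ihA => exact Or.inl (ihA hA.1 ha)
  | imp A B _ ihB => exact fun b hab _ => ihB hA.2 (M.mono_bot hab ha)

theorem force_of_isClassical (hM : IsMixed M) {A : Formula} (hA : A.IsClassical) {a : W}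
    (ha : M.force a A) (hna : ¬ M.fbot a) (b : W) : M.force b A := by
  induction A generalizing a b with
  | var k n =>
      cases hA
      exact hM.2 a n ha hna b
  | bot => exact absurd ha hna
  | and A B ihA ihB => exact ⟨ihA hA.1 ha.1 hna b, ihB hA.2 ha.2 hna b⟩
  | or A B ihA ihB => exact ha.imp (fun h => ihA hA.1 h hna b) (fun h => ihB hA.2 h hna b)
  | imp A B ihA ihB =>
      intro c _ hc
      by_cases hcb : M.fbot c
      · exact force_of_fbot hM (Formula.IsClassical.isIntuitionistic hA.2) hcb
      -- `A` spreads from `c` down to `a`, so `B` holds at `a` and spreads back to `c`.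
      · exact ihB hA.2 (ha a le_rfl (ihA hA.1 hc hcb a)) hna c

theorem force_of_force_neg_neg (hM : IsMixed M) {A : Formula} (hA : A.IsClassical) {a : W}
    (ha : M.force a A.neg.neg) : M.force a A := by
  by_cases hfa : M.fbot a
  · exact force_of_fbot hM (Formula.IsClassical.isIntuitionistic hA) hfa
  by_contra hnA
  have hneg : M.force a A.neg := fun b _ hb => by
    by_contra hfb
    exact hnA (force_of_isClassical hM hA hb hfb a)
  exact hfa (ha a le_rfl hneg)

end KripkeFrame

open KripkeFrame in
theorem Deriv.force {R : Rules} {Γ : Set Formula} {A : Formula} (h : Deriv R Γ A)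
    {M : KripkeFrame W} (hM : IsMixed M) {a : W}
    (hΓ : Γ ⊆ {B | M.force a B}) : M.force a A := by
  induction h generalizing a with
  | ax A => exact hΓ rfl
  | weak B _ ih => exact ih ((Set.subset_insert _ _).trans hΓ)
  | andI _ _ ih₁ ih₂ =>
      obtain ⟨hΓ₁, hΓ₂⟩ := Set.union_subset_iff.1 hΓ
      exact ⟨ih₁ hΓ₁, ih₂ hΓ₂⟩
  | andE₁ _ ih => exact (ih hΓ).1
  | andE₂ _ ih => exact (ih hΓ).2
  | orI₁ _ _ ih => exact Or.inl (ih hΓ)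
  | orI₂ _ _ ih => exact Or.inr (ih hΓ)
  | orE _ _ _ _ ih₁ ih₂ ih₃ =>
      simp only [Set.union_subset_iff] at hΓ
      obtain ⟨⟨hΓ₁, hΓ₂⟩, hΓ₃⟩ := hΓ
      rcases ih₁ hΓ₁ with hA₁ | hA₂
      · exact ih₂ (Set.insert_subset hA₁ hΓ₂)
      · exact ih₃ (Set.insert_subset hA₂ hΓ₃)
  | impI _ ih =>
      intro b hab hA₁
      exact ih (Set.insert_subset hA₁ fun C hC => force_mono hab (hΓ hC))
  | impE _ _ ih₁ ih₂ =>
      obtain ⟨hΓ₁, hΓ₂⟩ := Set.union_subset_iff.1 hΓ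
      exact ih₁ hΓ₁ a le_rfl (ih₂ hΓ₂)
  | botI _ hA _ ih => exact force_of_fbot hM hA (ih hΓ)
  | botC _ hA _ ih => exact force_of_force_neg_neg hM hA (ih hΓ)

end PML

/-- Soundness of PML: if Γ ⊢_pml A then Γ ⊨ A. -/
theorem PML.soundness (Γ : Set PML.Formula) (A : PML.Formula)
    (h : PML.DerivPML Γ A) : PML.Entails Γ A :=
  fun _ _ _ _ hM hΓ a => h.force hM fun B hB => hΓ B hB a
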